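/- arXiv:1607.00261 — 3 statements merged into one kernel-verified Lean document; each statement's English description precedes it below -/
import Mathlib

section
/- Let A and B be nondegenerate observables on ℂ^d with orthonormal eigenbases (|a⟩)_a and (|b⟩)_b. Then the set of noise pairs {(N(M,A), N(M,B)) : (M_m)_m a POVM on ℂ^d} equals the set {Σ_m p_m·(H(A|ρ_m), H(B|ρ_m)) : p_m ≥ 0, Σ_m p_m = 1, each ρ_m a d×d density matrix, and Σ_m p_m ρ_m = I/d}. -/
open Matrix
open scoped ComplexOrder

noncomputable section

/-- The binary-entropy-type function `h(x) = -((1+x)/2)·log₂((1+x)/2) - ((1-x)/2)·log₂((1-x)/2)`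
(with the convention `0·log₂ 0 = 0`, automatic since `Real.logb 2 0 = 0`). -/
def hFun (x : ℝ) : ℝ :=
  -(((1 + x) / 2) * Real.logb 2 ((1 + x) / 2)) - ((1 - x) / 2) * Real.logb 2 ((1 - x) / 2)

/-- `g : [0,1] → [0,1]` is the inverse of `h` on `[0,1]`. -/
def gFun : ℝ → ℝ := Function.invFunOn hFun (Set.Icc 0 1)

/-- The (real) quadratic form `⟨v|M|v⟩`. -/
def qform {d : ℕ} (M : Matrix (Fin d) (Fin d) ℂ) (v : Fin d → ℂ) : ℝ :=
  (star v ⬝ᵥ M.mulVec v).re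

/-- `v` is an orthonormal basis (family) of `ℂ^d`. -/
def IsONB {d : ℕ} (v : Fin d → Fin d → ℂ) : Prop :=
  ∀ i j, star (v i) ⬝ᵥ v j = if i = j then 1 else 0

/-- A POVM: a finite family of positive semidefinite matrices summing to the identity. -/
def IsPOVM {d : ℕ} {ι : Type*} [Fintype ι] (M : ι → Matrix (Fin d) (Fin d) ℂ) : Prop :=
  (∀ m, (M m).PosSemidef) ∧ ∑ m, M m = 1

/-- A density matrix: positive semidefinite with trace 1. -/
def IsDensity {d : ℕ} (ρ : Matrix (Fin d) (Fin d) ℂ) : Prop :=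
  ρ.PosSemidef ∧ ρ.trace = 1

/-- The noise `N(M,A) = -Σ_{m,a} p(m,a)·log₂(p(m,a)/p(m))` with `p(m,a) = (1/d)·⟨a|M_m|a⟩`
and `p(m) = (1/d)·Tr[M_m]`, for an observable `A` with orthonormal eigenbasis `v`. -/
def noise {d : ℕ} {ι : Type*} [Fintype ι] (M : ι → Matrix (Fin d) (Fin d) ℂ)
    (v : Fin d → Fin d → ℂ) : ℝ :=
  -∑ m, ∑ a, ((1 / (d : ℝ)) * qform (M m) (v a)) *
      Real.logb 2 (((1 / (d : ℝ)) * qform (M m) (v a)) / ((1 / (d : ℝ)) * (M m).trace.re))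

/-- `H(A|ρ) = -Σ_a ⟨a|ρ|a⟩·log₂⟨a|ρ|a⟩` for an observable with orthonormal eigenbasis `v`. -/
def Hobs {d : ℕ} (v : Fin d → Fin d → ℂ) (ρ : Matrix (Fin d) (Fin d) ℂ) : ℝ :=
  -∑ a, qform ρ (v a) * Real.logb 2 (qform ρ (v a))

/-- Conditional Shannon entropy `H(X|Y) = -Σ_{x,y} p(x,y)·log₂(p(x,y)/p(y))` of a finite joint
distribution, conditioning on the second variable. -/
def condEnt {X Y : Type*} [Fintype X] [Fintype Y] (p : X → Y → ℝ) : ℝ :=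
  -∑ x, ∑ y, p x y * Real.logb 2 (p x y / ∑ x', p x' y)

/-- Pauli matrix σ_x. -/
def σx : Matrix (Fin 2) (Fin 2) ℂ := !![0, 1; 1, 0]
/-- Pauli matrix σ_y. -/
def σy : Matrix (Fin 2) (Fin 2) ℂ := !![0, -Complex.I; Complex.I, 0]
/-- Pauli matrix σ_z. -/
def σz : Matrix (Fin 2) (Fin 2) ℂ := !![1, 0; 0, -1]

/-- `v·σ = v₁σ_x + v₂σ_y + v₃σ_z` for `v ∈ ℝ³`. -/
def vecσ (v : Fin 3 → ℝ) : Matrix (Fin 2) (Fin 2) ℂ :=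
  (v 0 : ℂ) • σx + (v 1 : ℂ) • σy + (v 2 : ℂ) • σz

/-- The canonical orthonormal eigenbasis of σ_z. -/
def basisZ : Fin 2 → Fin 2 → ℂ := fun i j => if i = j then 1 else 0

/-- The canonical orthonormal eigenbasis `|±x⟩` of σ_x. -/
def basisX : Fin 2 → Fin 2 → ℂ := fun i =>
  ![((1 / Real.sqrt 2 : ℝ) : ℂ),
    if i = 0 then ((1 / Real.sqrt 2 : ℝ) : ℂ) else (-(1 / Real.sqrt 2 : ℝ) : ℂ)]

/-- Eigenvalues `+1, -1` of a (nondegenerate) Pauli observable. -/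
def pmEig : Fin 2 → ℂ := fun i => if i = 0 then 1 else -1

end

/-! A POVM `M` and a weighted ensemble `(p, ρ)` correspond through `M m = d p_m ρ_m` with
`p_m = Tr[M m] / d` (if `Tr[M m] = 0` then `M m = 0` and `ρ_m` is arbitrary). Under this
correspondence `Σ M m = I` is exactly `Σ p_m ρ_m = I/d`, and the joint distribution
`p(m,a) = p_m ⟨a|ρ_m|a⟩` has marginal `p(m) = p_m`, so `N(M,A) = Σ p_m H(A|ρ_m)`. -/

section

variable {d : ℕ} {ι : Type*} [Fintype ι]

lemma qform_real_smul (c : ℝ) (M : Matrix (Fin d) (Fin d) ℂ) (v : Fin d → ℂ) :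
    qform ((c : ℂ) • M) v = c * qform M v := by
  simp [qform, smul_mulVec]

lemma Matrix.PosSemidef.trace_eq_ofReal_re {M : Matrix (Fin d) (Fin d) ℂ}
    (hM : M.PosSemidef) : M.trace = (M.trace.re : ℂ) :=
  Complex.eq_re_of_ofReal_le (r := 0) (by rw [Complex.ofReal_zero]; exact hM.trace_nonneg)

lemma isDensity_real_inv_smul_one (hd : 0 < d) :
    IsDensity ((((d : ℝ)⁻¹ : ℝ) : ℂ) • (1 : Matrix (Fin d) (Fin d) ℂ)) := by
  refine ⟨PosSemidef.one.smul (Complex.zero_le_real.mpr (by positivity)), ?_⟩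
  have : (d : ℂ) ≠ 0 := Nat.cast_ne_zero.2 hd.ne'
  simp [this]

lemma Matrix.PosSemidef.exists_isDensity_eq_trace_smul (hd : 0 < d)
    {M : Matrix (Fin d) (Fin d) ℂ} (hM : M.PosSemidef) :
    ∃ ρ, IsDensity ρ ∧ M = (M.trace.re : ℂ) • ρ := by
  by_cases h0 : M.trace.re = 0
  · have hM0 : M = 0 := hM.trace_eq_zero_iff.mp (by rw [hM.trace_eq_ofReal_re, h0]; simp)
    exact ⟨_, isDensity_real_inv_smul_one hd, by simp [hM0]⟩
  · refine ⟨((M.trace.re⁻¹ : ℝ) : ℂ) • M,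
      ⟨hM.smul (Complex.zero_le_real.mpr (inv_nonneg.mpr ?_)), ?_⟩, ?_⟩
    · exact Complex.nonneg_iff.mp hM.trace_nonneg |>.1
    · rw [trace_smul, smul_eq_mul, hM.trace_eq_ofReal_re, Complex.ofReal_re, ← Complex.ofReal_mul,
        inv_mul_cancel₀ h0, Complex.ofReal_one]
    · rw [smul_smul, ← Complex.ofReal_mul, mul_inv_cancel₀ h0, Complex.ofReal_one, one_smul]

lemma neg_sum_mul_logb_div_eq_mul_entropy (w : ℝ) (q : ι → ℝ) :
    -∑ a, (w * q a) * Real.logb 2 ((w * q a) / w) = w * -∑ a, q a * Real.logb 2 (q a) := by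
  rcases eq_or_ne w 0 with rfl | hw
  · simp
  · simp_rw [mul_div_cancel_left₀ _ hw, mul_assoc, ← Finset.mul_sum, mul_neg]

lemma noise_eq_sum_mul_Hobs (hd : 0 < d)
    {M ρ : ι → Matrix (Fin d) (Fin d) ℂ} {w : ι → ℝ}
    (hM : ∀ m, M m = (((d : ℝ) * w m : ℝ) : ℂ) • ρ m) (hρ : ∀ m, (ρ m).trace = 1)
    (v : Fin d → Fin d → ℂ) :
    noise M v = ∑ m, w m * Hobs v (ρ m) := by
  have hd' : (d : ℝ) ≠ 0 := Nat.cast_ne_zero.2 hd.ne'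
  have hscale : ∀ m (x : ℝ), 1 / (d : ℝ) * ((d * w m) * x) = w m * x := fun m x => by
    field_simp
  have hweight : ∀ m, 1 / (d : ℝ) * (d * w m) = w m := fun m => by field_simp
  have htrace : ∀ m, ((((d : ℝ) * w m : ℝ) : ℂ) • ρ m).trace.re = d * w m := fun m => by
    simp [trace_smul, hρ m]
  simp only [noise, hM, qform_real_smul, htrace, hscale, hweight, ← Finset.sum_neg_distrib]
  refine Finset.sum_congr rfl fun m _ => ?_
  rw [Finset.sum_neg_distrib]
  exact neg_sum_mul_logb_div_eq_mul_entropy (w m) fun a => qform (ρ m) (v a)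

lemma Finset.sum_smul_prod_mk (w f g : ι → ℝ) :
    ∑ m, w m • (f m, g m) = (∑ m, w m * f m, ∑ m, w m * g m) :=
  Prod.ext (by simp [Prod.fst_sum]) (by simp [Prod.snd_sum])

lemma sum_smul_eq_inv_smul_one_iff (hd : 0 < d) (w : ι → ℝ)
    (ρ : ι → Matrix (Fin d) (Fin d) ℂ) :
    ∑ m, (w m : ℂ) • ρ m = (d : ℂ)⁻¹ • 1 ↔ ∑ m, (((d : ℝ) * w m : ℝ) : ℂ) • ρ m = 1 := by
  simp_rw [Complex.ofReal_mul, Complex.ofReal_natCast, mul_smul, ← Finset.smul_sum]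
  exact eq_inv_smul_iff₀ (Nat.cast_ne_zero.2 hd.ne')

end

theorem stmt_3_general {d : ℕ} (hd : 0 < d) (vA vB : Fin d → Fin d → ℂ) :
    {x : ℝ × ℝ | ∃ (k : ℕ) (M : Fin k → Matrix (Fin d) (Fin d) ℂ),
        IsPOVM M ∧ x = (noise M vA, noise M vB)} =
    {x : ℝ × ℝ | ∃ (k : ℕ) (w : Fin k → ℝ) (ρ : Fin k → Matrix (Fin d) (Fin d) ℂ),
        (∀ m, 0 ≤ w m) ∧ (∑ m, w m = 1) ∧ (∀ m, IsDensity (ρ m)) ∧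
        (∑ m, (w m : ℂ) • ρ m = ((d : ℂ))⁻¹ • 1) ∧
        x = ∑ m, w m • (Hobs vA (ρ m), Hobs vB (ρ m))} := by
  have hd' : (d : ℝ) ≠ 0 := Nat.cast_ne_zero.2 hd.ne'
  ext x
  constructor
  · rintro ⟨k, M, ⟨hpsd, hsum⟩, rfl⟩
    choose ρ hρ hMρ using fun m => (hpsd m).exists_isDensity_eq_trace_smul hd
    set w : Fin k → ℝ := fun m => (M m).trace.re / d
    have hM : ∀ m, M m = (((d : ℝ) * w m : ℝ) : ℂ) • ρ m := fun m => by
      rw [mul_div_cancel₀ _ hd']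
      exact hMρ m
    refine ⟨k, w, ρ, fun m => div_nonneg (Complex.nonneg_iff.mp (hpsd m).trace_nonneg).1
      (Nat.cast_nonneg d), ?_, hρ, ?_, ?_⟩
    · rw [← Finset.sum_div, ← Complex.re_sum, ← trace_sum, hsum, trace_one, Fintype.card_fin,
        Complex.natCast_re, div_self hd']
    · rw [sum_smul_eq_inv_smul_one_iff hd, ← hsum]
      exact Finset.sum_congr rfl fun m _ => (hM m).symm
    · rw [Finset.sum_smul_prod_mk, noise_eq_sum_mul_Hobs hd hM fun m => (hρ m).2,
        noise_eq_sum_mul_Hobs hd hM fun m => (hρ m).2]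
  · rintro ⟨k, w, ρ, hw, -, hρ, hmix, rfl⟩
    refine ⟨k, fun m => (((d : ℝ) * w m : ℝ) : ℂ) • ρ m,
      ⟨fun m => (hρ m).1.smul ?_, (sum_smul_eq_inv_smul_one_iff hd w ρ).mp hmix⟩, ?_⟩
    · exact Complex.zero_le_real.mpr (mul_nonneg (Nat.cast_nonneg d) (hw m))
    · rw [Finset.sum_smul_prod_mk, noise_eq_sum_mul_Hobs hd (fun m => rfl) fun m => (hρ m).2,
        noise_eq_sum_mul_Hobs hd (fun m => rfl) fun m => (hρ m).2]

/-- The set of noise pairs `{(N(M,A), N(M,B)) : M a POVM on ℂ^d}` equals the set of points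
`Σ_m p_m·(H(A|ρ_m), H(B|ρ_m))` over finite weighted ensembles of density matrices satisfying
`Σ_m p_m ρ_m = I/d`. -/
theorem stmt_3 {d : ℕ} (hd : 0 < d) (vA vB : Fin d → Fin d → ℂ)
    (hA : IsONB vA) (hB : IsONB vB) :
    {x : ℝ × ℝ | ∃ (k : ℕ) (M : Fin k → Matrix (Fin d) (Fin d) ℂ),
        IsPOVM M ∧ x = (noise M vA, noise M vB)} =
    {x : ℝ × ℝ | ∃ (k : ℕ) (w : Fin k → ℝ) (ρ : Fin k → Matrix (Fin d) (Fin d) ℂ),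
        (∀ m, 0 ≤ w m) ∧ (∑ m, w m = 1) ∧ (∀ m, IsDensity (ρ m)) ∧
        (∑ m, (w m : ℂ) • ρ m = ((d : ℂ))⁻¹ • 1) ∧
        x = ∑ m, w m • (Hobs vA (ρ m), Hobs vB (ρ m))} :=
  stmt_3_general hd vA vB
end

section
/- Let {M, I − M} be a dichotomic POVM on ℂ² (M positive semidefinite with I − M positive semidefinite), and let a, b ∈ ℝ³ be unit vectors defining observables A = a·σ and B = b·σ. Then there exists a unit vector r ∈ ℝ³ such that N({M, I−M}, A) ≥ h(|a·r|) and N({M, I−M}, B) ≥ h(|b·r|). -/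
open Matrix
open scoped ComplexOrder

/-! Write `M = t • 1 + w·σ` with `t = tr M / 2`. Positivity of `M` and of `1 - M` gives
`‖w‖ ≤ t` and `‖w‖ ≤ 1 - t`. For an observable `c·σ` with eigenbasis `v`, the joint outcome
probabilities are `(t ± c·w)/2` for `M` and `(1 - t ∓ c·w)/2` for `1 - M`, so the noise is
`t h(c·w / t) + (1 - t) h(c·w / (1 - t))`. With `r = w / ‖w‖` we have `c·w = ‖w‖ (c·r)`, and
since `h` is even and decreasing on `[0, 1]`, each of `h(c·w / t)`, `h(c·w / (1 - t))` is at
least `h(|c·r|)`. -/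

open Real

lemma hFun_eq_binEntropy (x : ℝ) : hFun x = binEntropy (2⁻¹ + x / 2) / log 2 := by
  rw [hFun, binEntropy_eq_negMulLog_add_negMulLog_one_sub]
  simp only [negMulLog, logb]
  ring_nf

lemma hFun_neg (x : ℝ) : hFun (-x) = hFun x := by
  rw [hFun_eq_binEntropy, hFun_eq_binEntropy, neg_div, ← sub_eq_add_neg,
    binEntropy_two_inv_add]

lemma hFun_abs (x : ℝ) : hFun |x| = hFun x := by
  rcases abs_choice x with h | h <;> rw [h]
  exact hFun_neg x

lemma hFun_le_hFun_of_abs_le {x y : ℝ} (hyx : |y| ≤ |x|) (hx : |x| ≤ 1) :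
    hFun x ≤ hFun y := by
  rw [← hFun_abs x, ← hFun_abs y, hFun_eq_binEntropy, hFun_eq_binEntropy]
  gcongr ?_ / _
  refine binEntropy_strictAntiOn.antitoneOn ⟨?_, ?_⟩ ⟨?_, ?_⟩ ?_ <;>
    linarith [abs_nonneg x, abs_nonneg y]

lemma hFun_le_hFun_mul_div {y τ s : ℝ} (hy : |y| ≤ 1) (hτ : 0 ≤ τ) (hτs : τ ≤ s) :
    hFun y ≤ hFun (τ * y / s) := by
  refine hFun_le_hFun_of_abs_le ?_ hy
  rw [abs_div, abs_mul, abs_of_nonneg hτ, abs_of_nonneg (hτ.trans hτs)]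
  rcases eq_or_lt_of_le (hτ.trans hτs) with hs | hs
  · simp [← hs]
  · rw [div_le_iff₀ hs]
    nlinarith [abs_nonneg y]

lemma hFun_le_convex_comb {y τ t : ℝ} (hy : |y| ≤ 1) (hτ : 0 ≤ τ) (ht : τ ≤ t)
    (ht' : τ ≤ 1 - t) : hFun y ≤ t * hFun (τ * y / t) + (1 - t) * hFun (τ * y / (1 - t)) := by
  have h₁ := hFun_le_hFun_mul_div hy hτ ht
  have h₂ := hFun_le_hFun_mul_div hy hτ ht'
  nlinarith

lemma half_add_mul_hFun (p q : ℝ) :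
    (p + q) / 2 * hFun ((p - q) / (p + q)) =
      -(1 / 2 * p * logb 2 (1 / 2 * p / (1 / 2 * (p + q)))
        + 1 / 2 * q * logb 2 (1 / 2 * q / (1 / 2 * (p + q)))) := by
  rcases eq_or_ne (p + q) 0 with hpq | hpq
  · simp [hpq]
  have hp : (1 + (p - q) / (p + q)) / 2 = 1 / 2 * p / (1 / 2 * (p + q)) := by field_simp; ring
  have hq : (1 - (p - q) / (p + q)) / 2 = 1 / 2 * q / (1 / 2 * (p + q)) := by field_simp; ring
  rw [hFun, hp, hq]
  field_simp
  ring

namespace IsONB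

variable {d : ℕ} {v : Fin d → Fin d → ℂ}

lemma conjTranspose_mul_self_eq_one (hv : IsONB v) :
    (Matrix.of v)ᵀᴴ * (Matrix.of v)ᵀ = 1 := by
  ext i j
  simpa [Matrix.mul_apply, Matrix.one_apply, dotProduct] using hv i j

lemma trace_eq_sum_star_dotProduct_mulVec (hv : IsONB v) (X : Matrix (Fin d) (Fin d) ℂ) :
    X.trace = ∑ i, star (v i) ⬝ᵥ X *ᵥ v i := by
  set V := (Matrix.of v)ᵀ
  have hV : V * Vᴴ = 1 := mul_eq_one_comm.mp hv.conjTranspose_mul_self_eq_one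
  calc X.trace = (Vᴴ * X * V).trace := by
        rw [Matrix.trace_mul_cycle, hV, Matrix.one_mul]
    _ = ∑ i, star (v i) ⬝ᵥ X *ᵥ v i := by
        simp only [Matrix.trace, Matrix.diag, Matrix.mul_mul_apply]
        rfl

end IsONB

lemma exists_sum_sq_eq_one_and_eq_smul {n : ℕ} [NeZero n] (w : Fin n → ℝ) :
    ∃ r : Fin n → ℝ, ∑ i, r i ^ 2 = 1 ∧ w = √(∑ i, w i ^ 2) • r := by
  rcases eq_or_ne (∑ i, w i ^ 2) 0 with hw | hw
  · refine ⟨Pi.single 0 1, by simp [sq, Pi.single_apply], ?_⟩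
    rw [hw, Real.sqrt_zero, zero_smul]
    funext i
    simpa using (Finset.sum_eq_zero_iff_of_nonneg fun j _ => sq_nonneg (w j)).mp hw i
      (Finset.mem_univ i)
  · have hsqrt : √(∑ i, w i ^ 2) ≠ 0 := by positivity
    refine ⟨(√(∑ i, w i ^ 2))⁻¹ • w, ?_, (smul_inv_smul₀ hsqrt w).symm⟩
    simp only [Pi.smul_apply, smul_eq_mul, mul_pow, ← Finset.mul_sum, inv_pow,
      Real.sq_sqrt (Finset.sum_nonneg fun i _ => sq_nonneg (w i)), inv_mul_cancel₀ hw]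

lemma abs_sum_mul_le_one {n : ℕ} {a r : Fin n → ℝ} (ha : ∑ i, a i ^ 2 = 1)
    (hr : ∑ i, r i ^ 2 = 1) : |∑ i, a i * r i| ≤ 1 := by
  rw [← sq_le_one_iff_abs_le_one]
  simpa [ha, hr] using Finset.sum_mul_sq_le_sq_mul_sq Finset.univ a r

section Qubit

variable {v : Fin 2 → Fin 2 → ℂ} {A M : Matrix (Fin 2) (Fin 2) ℂ}

lemma qform_add_qform (hv : IsONB v) (X : Matrix (Fin 2) (Fin 2) ℂ) :
    qform X (v 0) + qform X (v 1) = X.trace.re := by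
  rw [hv.trace_eq_sum_star_dotProduct_mulVec, Fin.sum_univ_two, Complex.add_re, qform, qform]

lemma qform_sub_qform (hv : IsONB v) (heig : ∀ i, A *ᵥ v i = pmEig i • v i)
    (X : Matrix (Fin 2) (Fin 2) ℂ) :
    qform X (v 0) - qform X (v 1) = (X * A).trace.re := by
  simp only [hv.trace_eq_sum_star_dotProduct_mulVec, Fin.sum_univ_two, ← Matrix.mulVec_mulVec,
    heig, Matrix.mulVec_smul, dotProduct_smul, pmEig, qform]
  simp [sub_eq_add_neg]

lemma noise_eq_sum_mul_hFun {ι : Type*} [Fintype ι] (M : ι → Matrix (Fin 2) (Fin 2) ℂ)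
    (hv : IsONB v) (heig : ∀ i, A *ᵥ v i = pmEig i • v i) :
    noise M v = ∑ m, (M m).trace.re / 2 * hFun ((M m * A).trace.re / (M m).trace.re) := by
  rw [noise, ← Finset.sum_neg_distrib]
  refine Finset.sum_congr rfl fun m _ => ?_
  rw [← qform_add_qform hv, ← qform_sub_qform hv heig, half_add_mul_hFun, Fin.sum_univ_two]
  norm_num

/-- For Hermitian `M` this is the vector `w` with `M = (tr M / 2) • 1 + w·σ`. -/
noncomputable def blochVector (M : Matrix (Fin 2) (Fin 2) ℂ) : Fin 3 → ℝ :=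
  ![(M 1 0).re, (M 1 0).im, ((M 0 0).re - (M 1 1).re) / 2]

lemma blochVector_one_sub (M : Matrix (Fin 2) (Fin 2) ℂ) :
    blochVector (1 - M) = -blochVector M := by
  ext i
  fin_cases i <;> simp [blochVector]
  ring

lemma trace_vecσ (c : Fin 3 → ℝ) : (vecσ c).trace = 0 := by
  simp [vecσ, σx, σy, σz, trace_fin_two]

lemma trace_mul_vecσ (hM : M.IsHermitian) (c : Fin 3 → ℝ) :
    (M * vecσ c).trace.re = 2 * ∑ i, c i * blochVector M i := by
  have h01 : M 0 1 = star (M 1 0) := (hM.apply 0 1).symm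
  simp [trace_fin_two, Matrix.mul_apply, vecσ, σx, σy, σz, blochVector,
    Fin.sum_univ_three, h01]
  ring

lemma sum_sq_blochVector_le (hM : M.PosSemidef) :
    ∑ i, blochVector M i ^ 2 ≤ (M.trace.re / 2) ^ 2 := by
  have h01 : M 0 1 = star (M 1 0) := (hM.1.apply 0 1).symm
  have h00 : (M 0 0).im = 0 := Complex.conj_eq_iff_im.mp (hM.1.apply 0 0)
  have h11 : (M 1 1).im = 0 := Complex.conj_eq_iff_im.mp (hM.1.apply 1 1)
  have hdet : 0 ≤ M.det.re := (Complex.nonneg_iff.mp hM.det_nonneg).1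
  simp only [det_fin_two, h01, Complex.sub_re, Complex.mul_re, h00, h11, Complex.star_def,
    Complex.conj_re, Complex.conj_im] at hdet
  simp [blochVector, Fin.sum_univ_three, trace_fin_two]
  nlinarith

lemma sqrt_sum_sq_blochVector_le (hM : M.PosSemidef) :
    √(∑ i, blochVector M i ^ 2) ≤ M.trace.re / 2 := by
  have htr : 0 ≤ M.trace.re := (Complex.nonneg_iff.mp hM.trace_nonneg).1
  exact Real.sqrt_le_iff.mpr ⟨by positivity, sum_sq_blochVector_le hM⟩

lemma sqrt_sum_sq_blochVector_le_one_sub (hM : (1 - M).PosSemidef) :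
    √(∑ i, blochVector M i ^ 2) ≤ 1 - M.trace.re / 2 := by
  have h := sqrt_sum_sq_blochVector_le hM
  simp only [blochVector_one_sub, Pi.neg_apply, neg_sq, trace_sub, trace_one,
    Complex.sub_re, Fintype.card_fin] at h
  exact h.trans_eq (by norm_num; ring)

lemma noise_dichotomic_eq (hM : M.IsHermitian) {c : Fin 3 → ℝ}
    (hv : IsONB v) (heig : ∀ i, vecσ c *ᵥ v i = pmEig i • v i) :
    noise ![M, 1 - M] v =
      M.trace.re / 2 * hFun ((∑ i, c i * blochVector M i) / (M.trace.re / 2)) +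
        (1 - M.trace.re / 2) * hFun ((∑ i, c i * blochVector M i) / (1 - M.trace.re / 2)) := by
  have hT : (1 - M).trace.re = 2 * (1 - M.trace.re / 2) := by
    simp [trace_sub]
    ring
  have hX : ((1 - M) * vecσ c).trace.re = -(2 * ∑ i, c i * blochVector M i) := by
    simp [sub_mul, trace_sub, trace_vecσ, trace_mul_vecσ hM]
  rw [noise_eq_sum_mul_hFun _ hv heig, Fin.sum_univ_two]
  simp only [cons_val_zero, cons_val_one, cons_val_fin_one]
  rw [trace_mul_vecσ hM, hT, hX, neg_div, hFun_neg, mul_div_mul_left _ _ two_ne_zero]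
  generalize ∑ i, c i * blochVector M i = X
  rw [div_div_eq_mul_div, mul_comm X 2]
  ring

lemma hFun_abs_le_noise (hM : M.PosSemidef) (hM' : (1 - M).PosSemidef) {r c : Fin 3 → ℝ}
    (hwr : blochVector M = √(∑ i, blochVector M i ^ 2) • r) (hr : ∑ i, r i ^ 2 = 1)
    (hc : ∑ i, c i ^ 2 = 1) (hv : IsONB v) (heig : ∀ i, vecσ c *ᵥ v i = pmEig i • v i) :
    hFun |∑ i, c i * r i| ≤ noise ![M, 1 - M] v := by
  have hcw : ∑ i, c i * blochVector M i = √(∑ i, blochVector M i ^ 2) * ∑ i, c i * r i := by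
    conv_lhs => rw [hwr]
    rw [Finset.mul_sum]
    exact Finset.sum_congr rfl fun i _ => by simp only [Pi.smul_apply, smul_eq_mul]; ring
  rw [noise_dichotomic_eq hM.1 hv heig, hcw, hFun_abs]
  exact hFun_le_convex_comb (abs_sum_mul_le_one hc hr) (Real.sqrt_nonneg _)
    (sqrt_sum_sq_blochVector_le hM) (sqrt_sum_sq_blochVector_le_one_sub hM')

end Qubit

/-- For a dichotomic POVM `{M, I−M}` and Pauli observables `A = a·σ`, `B = b·σ`, there is a
unit vector `r` with `N({M,I−M},A) ≥ h(|a·r|)` and `N({M,I−M},B) ≥ h(|b·r|)`. -/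
theorem stmt_9 (M : Matrix (Fin 2) (Fin 2) ℂ) (hM : M.PosSemidef)
    (hM' : (1 - M).PosSemidef)
    (a b : Fin 3 → ℝ) (ha : ∑ i, a i ^ 2 = 1) (hb : ∑ i, b i ^ 2 = 1)
    (vA vB : Fin 2 → Fin 2 → ℂ) (hA : IsONB vA) (hB : IsONB vB)
    (hAeig : ∀ i, (vecσ a).mulVec (vA i) = pmEig i • vA i)
    (hBeig : ∀ i, (vecσ b).mulVec (vB i) = pmEig i • vB i) :
    ∃ r : Fin 3 → ℝ, (∑ i, r i ^ 2 = 1) ∧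
      hFun |∑ i, a i * r i| ≤ noise ![M, 1 - M] vA ∧
      hFun |∑ i, b i * r i| ≤ noise ![M, 1 - M] vB := by
  obtain ⟨r, hr, hwr⟩ := exists_sum_sq_eq_one_and_eq_smul (blochVector M)
  exact ⟨r, hr, hFun_abs_le_noise hM hM' hwr hr ha hA hAeig,
    hFun_abs_le_noise hM hM' hwr hr hb hB hBeig⟩
end

section
/- For every θ ∈ (0, π/2), the pair N_θ = (cos θ + h(sin θ))/(1 + cos θ) and D_θ = h(cos θ)/(1 + cos θ) satisfies g(N_θ)² + g(D_θ)² > 1. (Hence the relation g(N)² + g(D)² ≤ 1 proposed by Sulyok et al. for the noise-disturbance tradeoff of orthogonal qubit observables is violated.) -/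
open Matrix
open scoped ComplexOrder

/-!
Write `g(N_θ) = sin ψ`; since `h(sin θ) < N_θ < 1`, one has `0 < ψ < θ`, and it suffices to show
`g(D_θ) > cos ψ`. As `h(sin ψ) = N_θ`, this unwinds to the chord inequality
`(h(cos θ) - h(cos ψ)) (1 - h(sin ψ)) < h(cos ψ) (h(sin ψ) - h(sin θ))`
for the curve `x ↦ (-h(sin x), h(cos x))` at the parameters `0 < ψ < θ`. Since
`h' = -artanh / log 2`, the slope of this curve is `K(cos x) / K(sin x)` with
`K(u) = artanh u / u = ∑ u^(2k) / (2k+1)`, which is increasing on `(0, 1)`; so the slope decreases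
along `(0, π/2)`, and Cauchy's mean value theorem on `[0, ψ]` and `[ψ, θ]` compares the two chords.
-/

open Real Set

namespace Real

lemma two_mul_artanh {x : ℝ} (hx : x ∈ Ioo (-1) 1) :
    2 * artanh x = log (1 + x) - log (1 - x) := by
  obtain ⟨h₁, h₂⟩ := hx
  rw [artanh_eq_half_log ⟨h₁.le, h₂.le⟩, log_div (by linarith) (by linarith)]
  ring

lemma hasSum_artanh_div {x : ℝ} (hx : x ∈ Ioo (-1) 1) (hx₀ : x ≠ 0) :
    HasSum (fun k : ℕ => x ^ (2 * k) / (2 * k + 1)) (artanh x / x) := by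
  have hs := (hasSum_log_sub_log_of_abs_lt_one (abs_lt.2 hx)).div_const (2 * x)
  rw [← two_mul_artanh hx, mul_div_mul_left _ _ two_ne_zero] at hs
  refine hs.congr_fun fun k => ?_
  rw [pow_succ]
  field_simp

lemma strictMonoOn_artanh_div : StrictMonoOn (fun x => artanh x / x) (Ioo 0 1) := by
  intro x hx y hy hxy
  have mem : Ioo (0 : ℝ) 1 ⊆ Ioo (-1) 1 := Ioo_subset_Ioo_left (by norm_num)
  refine hasSum_lt (i := 1) (fun k => ?_) ?_ (hasSum_artanh_div (mem hx) hx.1.ne')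
    (hasSum_artanh_div (mem hy) hy.1.ne')
  · gcongr
    exact hx.1.le
  · norm_num
    nlinarith [hx.1]

end Real

lemma hFun_eq_negMulLog (x : ℝ) :
    hFun x = (negMulLog ((1 + x) / 2) + negMulLog ((1 - x) / 2)) / log 2 := by
  simp only [hFun, negMulLog, logb]
  ring

lemma continuous_hFun : Continuous hFun := by
  simp only [funext hFun_eq_negMulLog]
  fun_prop

lemma hasDerivAt_hFun {x : ℝ} (hx : x ∈ Ioo (-1) 1) :
    HasDerivAt hFun (-artanh x / log 2) x := by
  obtain ⟨h₁, h₂⟩ := hx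
  have hp := ((hasDerivAt_negMulLog (x := (1 + x) / 2) (by linarith)).comp x
    (((hasDerivAt_id x).const_add 1).div_const 2))
  have hq := ((hasDerivAt_negMulLog (x := (1 - x) / 2) (by linarith)).comp x
    (((hasDerivAt_id x).const_sub 1).div_const 2))
  rw [funext hFun_eq_negMulLog]
  refine ((hp.add hq).div_const (log 2)).congr_deriv ?_
  congr 1
  rw [log_div (by linarith) two_ne_zero, log_div (by linarith) two_ne_zero]
  linarith [two_mul_artanh ⟨h₁, h₂⟩]

lemma hFun_zero : hFun 0 = 1 := by
  have half : logb 2 (1 / 2) = -1 := by rw [one_div, logb_inv, logb_self_eq_one one_lt_two]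
  norm_num [hFun, half]

lemma hFun_one : hFun 1 = 0 := by
  norm_num [hFun]

lemma strictAntiOn_hFun : StrictAntiOn hFun (Icc 0 1) := by
  refine strictAntiOn_of_hasDerivWithinAt_neg (f' := fun x => -artanh x / log 2)
    (convex_Icc 0 1) continuous_hFun.continuousOn (fun x hx => ?_) (fun x hx => ?_) <;>
    rw [interior_Icc] at hx
  · exact (hasDerivAt_hFun (Ioo_subset_Ioo_left (by norm_num) hx)).hasDerivWithinAt
  · exact div_neg_of_neg_of_pos (neg_neg_of_pos (artanh_pos hx)) (log_pos one_lt_two)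

lemma hFun_mem_Ioo {x : ℝ} (hx : x ∈ Ioo 0 1) : hFun x ∈ Ioo 0 1 := by
  have h₀ : (0 : ℝ) ∈ Icc 0 1 := ⟨le_rfl, zero_le_one⟩
  have h₁ : (1 : ℝ) ∈ Icc 0 1 := ⟨zero_le_one, le_rfl⟩
  have hx' : x ∈ Icc 0 1 := Ioo_subset_Icc_self hx
  exact ⟨hFun_one ▸ strictAntiOn_hFun hx' h₁ hx.2, hFun_zero ▸ strictAntiOn_hFun h₀ hx' hx.1⟩

lemma gFun_mem_Icc_and_hFun_gFun {y : ℝ} (hy : y ∈ Icc 0 1) :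
    gFun y ∈ Icc 0 1 ∧ hFun (gFun y) = y := by
  have hsurj := intermediate_value_Icc' zero_le_one continuous_hFun.continuousOn
  rw [hFun_zero, hFun_one] at hsurj
  obtain ⟨x, hx, rfl⟩ := hsurj hy
  exact ⟨Function.invFunOn_mem ⟨x, hx, rfl⟩, Function.invFunOn_eq ⟨x, hx, rfl⟩⟩

lemma lt_gFun_iff {x y : ℝ} (hx : x ∈ Icc 0 1) (hy : y ∈ Icc 0 1) :
    x < gFun y ↔ y < hFun x := by
  obtain ⟨hgy, hhg⟩ := gFun_mem_Icc_and_hFun_gFun hy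
  conv_rhs => rw [← hhg]
  exact (strictAntiOn_hFun.lt_iff_gt hgy hx).symm

lemma gFun_lt_iff {x y : ℝ} (hx : x ∈ Icc 0 1) (hy : y ∈ Icc 0 1) :
    gFun y < x ↔ hFun x < y := by
  obtain ⟨hgy, hhg⟩ := gFun_mem_Icc_and_hFun_gFun hy
  conv_rhs => rw [← hhg]
  exact (strictAntiOn_hFun.lt_iff_gt hx hgy).symm

/-- If `f' / g'` decreases, so do the slopes of the chords of the curve `(g, f)` over `[a, b]` and
`[b, c]`. -/
lemma sub_mul_sub_lt_of_strictAntiOn_deriv_div {f g f' g' : ℝ → ℝ} {a b c : ℝ}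
    (hab : a < b) (hbc : b < c) (hf : ContinuousOn f (Icc a c)) (hg : ContinuousOn g (Icc a c))
    (hff' : ∀ x ∈ Ioo a c, HasDerivAt f (f' x) x) (hgg' : ∀ x ∈ Ioo a c, HasDerivAt g (g' x) x)
    (hg'_pos : ∀ x ∈ Ioo a c, 0 < g' x) (hanti : StrictAntiOn (fun x => f' x / g' x) (Ioo a c)) :
    (f c - f b) * (g b - g a) < (f b - f a) * (g c - g b) := by
  have hg_mono : StrictMonoOn g (Icc a c) :=
    strictMonoOn_of_hasDerivWithinAt_pos (convex_Icc a c) hg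
      (fun x hx => (hgg' x (by rwa [interior_Icc] at hx)).hasDerivWithinAt)
      (fun x hx => hg'_pos x (by rwa [interior_Icc] at hx))
  have hA : 0 < g b - g a := sub_pos.2 <| hg_mono (left_mem_Icc.2 (hab.trans hbc).le)
    ⟨hab.le, hbc.le⟩ hab
  have hB : 0 < g c - g b := sub_pos.2 <| hg_mono ⟨hab.le, hbc.le⟩
    (right_mem_Icc.2 (hab.trans hbc).le) hbc
  have sub_left : Ioo a b ⊆ Ioo a c := Ioo_subset_Ioo_right hbc.le
  have sub_right : Ioo b c ⊆ Ioo a c := Ioo_subset_Ioo_left hab.le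
  obtain ⟨η, hη, hEη⟩ := exists_ratio_hasDerivAt_eq_ratio_slope f f' hab
    (hf.mono (Icc_subset_Icc_right hbc.le)) (fun x hx => hff' x (sub_left hx)) g g'
    (hg.mono (Icc_subset_Icc_right hbc.le)) (fun x hx => hgg' x (sub_left hx))
  obtain ⟨ξ, hξ, hEξ⟩ := exists_ratio_hasDerivAt_eq_ratio_slope f f' hbc
    (hf.mono (Icc_subset_Icc_left hab.le)) (fun x hx => hff' x (sub_right hx)) g g'
    (hg.mono (Icc_subset_Icc_left hab.le)) (fun x hx => hgg' x (sub_right hx))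
  have hgη := hg'_pos η (sub_left hη)
  have hgξ := hg'_pos ξ (sub_right hξ)
  have hcross : f' ξ * g' η < f' η * g' ξ :=
    (div_lt_div_iff₀ hgξ hgη).1 (hanti (sub_left hη) (sub_right hξ) (hη.2.trans hξ.1))
  refine lt_of_mul_lt_mul_right (a := g' ξ * g' η) ?_ (by positivity)
  linear_combination (g b - g a) * (g c - g b) * hcross - (g b - g a) * g' η * hEξ
    + (g c - g b) * g' ξ * hEη

lemma sin_mem_Ioo_zero_one {x : ℝ} (hx : x ∈ Ioo 0 (π / 2)) : sin x ∈ Ioo 0 1 :=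
  ⟨sin_pos_of_pos_of_lt_pi hx.1 (by linarith [hx.2, pi_pos]),
    sin_pi_div_two ▸ sin_lt_sin_of_lt_of_le_pi_div_two (by linarith [hx.1, pi_pos]) le_rfl hx.2⟩

lemma cos_mem_Ioo_zero_one {x : ℝ} (hx : x ∈ Ioo 0 (π / 2)) : cos x ∈ Ioo 0 1 := by
  rw [← sin_pi_div_two_sub]
  exact sin_mem_Ioo_zero_one ⟨by linarith [hx.2], by linarith [hx.1]⟩

lemma hasDerivAt_hFun_cos {x : ℝ} (hx : cos x ∈ Ioo (-1) 1) :
    HasDerivAt (fun y => hFun (cos y)) (sin x * artanh (cos x) / log 2) x := by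
  refine ((hasDerivAt_hFun hx).comp x (hasDerivAt_cos x)).congr_deriv ?_
  ring

lemma hasDerivAt_neg_hFun_sin {x : ℝ} (hx : sin x ∈ Ioo (-1) 1) :
    HasDerivAt (fun y => -hFun (sin y)) (cos x * artanh (sin x) / log 2) x := by
  refine ((hasDerivAt_hFun hx).comp x (hasDerivAt_sin x)).neg.congr_deriv ?_
  ring

lemma strictAntiOn_artanh_cos_div_artanh_sin :
    StrictAntiOn (fun x => (sin x * artanh (cos x) / log 2) / (cos x * artanh (sin x) / log 2))
      (Ioo 0 (π / 2)) := by
  have hK_pos : ∀ {u : ℝ}, u ∈ Ioo (0 : ℝ) 1 → 0 < artanh u / u :=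
    fun hu => div_pos (artanh_pos hu) hu.1
  refine StrictAntiOn.congr (f₁ := fun x => (artanh (cos x) / cos x) / (artanh (sin x) / sin x))
    (fun x hx y hy hxy => ?_) (fun x hx => ?_)
  · have hsx := sin_mem_Ioo_zero_one hx
    have hsy := sin_mem_Ioo_zero_one hy
    have hcx := cos_mem_Ioo_zero_one hx
    have hcy := cos_mem_Ioo_zero_one hy
    have hsin : sin x < sin y := sin_lt_sin_of_lt_of_le_pi_div_two
      (by linarith [hx.1, pi_pos]) hy.2.le hxy
    have hcos : cos y < cos x := cos_lt_cos_of_nonneg_of_le_pi_div_two hx.1.le hy.2.le hxy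
    exact div_lt_div₀ (strictMonoOn_artanh_div hcy hcx hcos)
      (strictMonoOn_artanh_div hsx hsy hsin).le (hK_pos hcx).le (hK_pos hsx)
  · have hs := (sin_mem_Ioo_zero_one hx).1.ne'
    have hc := (cos_mem_Ioo_zero_one hx).1.ne'
    have hl : log 2 ≠ 0 := (log_pos one_lt_two).ne'
    field_simp

lemma hFun_cos_chord {ψ θ : ℝ} (hψ : 0 < ψ) (hψθ : ψ < θ) (hθ : θ < π / 2) :
    (hFun (cos θ) - hFun (cos ψ)) * (1 - hFun (sin ψ)) <
      hFun (cos ψ) * (hFun (sin ψ) - hFun (sin θ)) := by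
  have mem : Ioo (0 : ℝ) 1 ⊆ Ioo (-1) 1 := Ioo_subset_Ioo_left (by norm_num)
  have hI : Ioo 0 θ ⊆ Ioo 0 (π / 2) := Ioo_subset_Ioo_right hθ.le
  have key := sub_mul_sub_lt_of_strictAntiOn_deriv_div hψ hψθ
    (continuous_hFun.comp continuous_cos).continuousOn
    (continuous_hFun.comp continuous_sin).neg.continuousOn
    (fun x hx => hasDerivAt_hFun_cos (mem (cos_mem_Ioo_zero_one (hI hx))))
    (fun x hx => hasDerivAt_neg_hFun_sin (mem (sin_mem_Ioo_zero_one (hI hx))))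
    (fun x hx => div_pos (mul_pos (cos_mem_Ioo_zero_one (hI hx)).1
      (artanh_pos (sin_mem_Ioo_zero_one (hI hx)))) (log_pos one_lt_two))
    (strictAntiOn_artanh_cos_div_artanh_sin.mono hI)
  simp only [Function.comp_apply, Pi.neg_apply, cos_zero, sin_zero, hFun_zero, hFun_one] at key
  linarith

/-- For every `θ ∈ (0, π/2)`, with `N_θ = (cos θ + h(sin θ))/(1 + cos θ)` and
`D_θ = h(cos θ)/(1 + cos θ)`, one has `g(N_θ)² + g(D_θ)² > 1`. -/
theorem stmt_15 (θ : ℝ) (hθ : θ ∈ Set.Ioo 0 (Real.pi / 2)) :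
    1 < gFun ((Real.cos θ + hFun (Real.sin θ)) / (1 + Real.cos θ)) ^ 2 +
        gFun (hFun (Real.cos θ) / (1 + Real.cos θ)) ^ 2 := by
  obtain ⟨hs₀, hs₁⟩ := sin_mem_Ioo_zero_one hθ
  obtain ⟨hc₀, hc₁⟩ := cos_mem_Ioo_zero_one hθ
  obtain ⟨hHs₀, hHs₁⟩ := hFun_mem_Ioo ⟨hs₀, hs₁⟩
  obtain ⟨hHc₀, hHc₁⟩ := hFun_mem_Ioo ⟨hc₀, hc₁⟩
  have hc : 0 < 1 + cos θ := by linarith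
  set N := (cos θ + hFun (sin θ)) / (1 + cos θ)
  set D := hFun (cos θ) / (1 + cos θ)
  have hN_mul : (1 + cos θ) * N = cos θ + hFun (sin θ) := mul_div_cancel₀ _ hc.ne'
  have hN_lt : N < 1 := (div_lt_one hc).2 (by linarith)
  have hN_mem : N ∈ Icc 0 1 := ⟨div_nonneg (by linarith) hc.le, hN_lt.le⟩
  have hD_mem : D ∈ Icc 0 1 := ⟨div_nonneg hHc₀.le hc.le, (div_le_one hc).2 (by linarith)⟩
  have ha₀ : 0 < gFun N := (lt_gFun_iff ⟨le_rfl, zero_le_one⟩ hN_mem).2 (hFun_zero ▸ hN_lt)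
  have ha_lt : gFun N < sin θ := (gFun_lt_iff ⟨hs₀.le, hs₁.le⟩ hN_mem).2
    ((lt_div_iff₀ hc).2 (by nlinarith))
  obtain ⟨haI, hha⟩ := gFun_mem_Icc_and_hFun_gFun hN_mem
  set ψ := arcsin (gFun N)
  have hsinψ : sin ψ = gFun N := sin_arcsin (by linarith [haI.1]) haI.2
  have hψ₀ : 0 < ψ := arcsin_pos.2 ha₀
  have hψθ : ψ < θ := (arcsin_lt_iff_lt_sin ⟨by linarith [haI.1], haI.2⟩
    ⟨by linarith [hθ.1, pi_pos], hθ.2.le⟩).2 ha_lt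
  have hcosψ := cos_mem_Ioo_zero_one ⟨hψ₀, hψθ.trans hθ.2⟩
  have chord := hFun_cos_chord hψ₀ hψθ hθ.2
  rw [hsinψ, hha] at chord
  have hD_lt : D < hFun (cos ψ) := by
    refine (div_lt_iff₀ hc).2 (lt_of_mul_lt_mul_right (a := 1 - N) ?_ (by linarith))
    linear_combination chord + hFun (cos ψ) * hN_mul
  have hb : cos ψ < gFun D := (lt_gFun_iff ⟨hcosψ.1.le, hcosψ.2.le⟩ hD_mem).2 hD_lt
  calc 1 = gFun N ^ 2 + cos ψ ^ 2 := by rw [← hsinψ, sin_sq_add_cos_sq]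
    _ < gFun N ^ 2 + gFun D ^ 2 := by gcongr; exact hcosψ.1.le
end
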